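/- The function g(x) = E(√x)(K(√x) − E(√x)) is convex on [0, 1), where K(k) = ∫₀^{π/2} (1 − k² sin²t)^{−1/2} dt and E(k) = ∫₀^{π/2} (1 − k² sin²t)^{1/2} dt; specifically g''(x) = (1/2)[E(√x)/(1−x) − (K(√x)−E(√x))/x]² ≥ 0. -/

import Mathlib

open Real

/-- Complete elliptic integral of the first kind. -/
noncomputable def ellipticK (k : ℝ) : ℝ :=
  ∫ t in (0:ℝ)..(π / 2), (Real.sqrt (1 - k ^ 2 * Real.sin t ^ 2))⁻¹

/-- Complete elliptic integral of the second kind. -/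
noncomputable def ellipticE (k : ℝ) : ℝ :=
  ∫ t in (0:ℝ)..(π / 2), Real.sqrt (1 - k ^ 2 * Real.sin t ^ 2)

noncomputable def gEK (x : ℝ) : ℝ :=
  ellipticE (Real.sqrt x) * (ellipticK (Real.sqrt x) - ellipticE (Real.sqrt x))

open MeasureTheory intervalIntegral Set Metric

-- Basic positivity
lemma delta_pos {k : ℝ} (hk : |k| < 1) (t : ℝ) : 0 < 1 - k ^ 2 * Real.sin t ^ 2 := by
  have h1 : k ^ 2 < 1 := by
    have := abs_nonneg k
    nlinarith [abs_lt.mp hk]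
  nlinarith [Real.sin_sq_le_one t, sq_nonneg (Real.sin t), sq_nonneg k]

lemma sqrt_delta_pos {k : ℝ} (hk : |k| < 1) (t : ℝ) :
    0 < Real.sqrt (1 - k ^ 2 * Real.sin t ^ 2) :=
  Real.sqrt_pos.mpr (delta_pos hk t)

-- derivative in k of the inner function
lemma hasDerivAt_inner (k t : ℝ) :
    HasDerivAt (fun k : ℝ => 1 - k ^ 2 * Real.sin t ^ 2) (-(2 * k * Real.sin t ^ 2)) k := by
  simpa using ((hasDerivAt_pow 2 k).mul_const (Real.sin t ^ 2)).const_sub 1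

lemma hasDerivAt_sqrt_delta {k : ℝ} (hk : |k| < 1) (t : ℝ) :
    HasDerivAt (fun k : ℝ => Real.sqrt (1 - k ^ 2 * Real.sin t ^ 2))
      (-(k * Real.sin t ^ 2) / Real.sqrt (1 - k ^ 2 * Real.sin t ^ 2)) k := by
  have h := (Real.hasDerivAt_sqrt (ne_of_gt (delta_pos hk t))).comp k (hasDerivAt_inner k t)
  refine h.congr_deriv (Eq.symm ?_)
  field_simp

lemma hasDerivAt_inv_sqrt_delta {k : ℝ} (hk : |k| < 1) (t : ℝ) :
    HasDerivAt (fun k : ℝ => (Real.sqrt (1 - k ^ 2 * Real.sin t ^ 2))⁻¹)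
      (k * Real.sin t ^ 2 / Real.sqrt (1 - k ^ 2 * Real.sin t ^ 2) ^ 3) k := by
  have h := (hasDerivAt_sqrt_delta hk t).inv (ne_of_gt (sqrt_delta_pos hk t))
  refine h.congr_deriv (Eq.symm ?_)
  have hpos := sqrt_delta_pos hk t
  rw [div_eq_div_iff (by positivity) (by positivity)]
  field_simp

lemma cont_delta (k : ℝ) : Continuous fun t : ℝ => Real.sqrt (1 - k ^ 2 * Real.sin t ^ 2) :=
  (continuous_const.sub (continuous_const.mul (Real.continuous_sin.pow 2))).sqrt

lemma cont_inv_delta {k : ℝ} (hk : |k| < 1) :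
    Continuous fun t : ℝ => (Real.sqrt (1 - k ^ 2 * Real.sin t ^ 2))⁻¹ :=
  (cont_delta k).inv₀ fun t => ne_of_gt (sqrt_delta_pos hk t)

lemma ball_abs_le {k : ℝ} (hk : |k| < 1) {x : ℝ} (hx : x ∈ ball k ((1 - |k|) / 2)) :
    |x| ≤ (1 + |k|) / 2 := by
  have h := mem_ball_iff_norm.mp hx
  rw [Real.norm_eq_abs] at h
  have := abs_sub_abs_le_abs_sub x k
  linarith

lemma ball_abs_lt_one {k : ℝ} (hk : |k| < 1) {x : ℝ} (hx : x ∈ ball k ((1 - |k|) / 2)) :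
    |x| < 1 := lt_of_le_of_lt (ball_abs_le hk hx) (by linarith)

lemma sqrt_delta_lower {x : ℝ} {r : ℝ} (hxr : |x| ≤ r) (hr : r < 1) (t : ℝ) :
    Real.sqrt (1 - r ^ 2) ≤ Real.sqrt (1 - x ^ 2 * Real.sin t ^ 2) := by
  apply Real.sqrt_le_sqrt
  have h1 : x ^ 2 ≤ r ^ 2 := by nlinarith [abs_nonneg x, sq_abs x]
  nlinarith [Real.sin_sq_le_one t, sq_nonneg (Real.sin t), sq_nonneg x]

lemma hasDerivAt_ellipticE {k : ℝ} (hk : |k| < 1) :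
    HasDerivAt ellipticE
      (∫ t in (0:ℝ)..(π / 2),
        -(k * Real.sin t ^ 2) / Real.sqrt (1 - k ^ 2 * Real.sin t ^ 2)) k := by
  set r : ℝ := (1 + |k|) / 2 with hr
  have hr1 : r < 1 := by rw [hr]; linarith
  have hr0 : 0 ≤ r := by rw [hr]; positivity
  have hrq : (0:ℝ) < 1 - r ^ 2 := by nlinarith
  have hε : (0:ℝ) < (1 - |k|) / 2 := by linarith
  have h := intervalIntegral.hasDerivAt_integral_of_dominated_loc_of_deriv_le
    (F := fun x t => Real.sqrt (1 - x ^ 2 * Real.sin t ^ 2))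
    (F' := fun x t => -(x * Real.sin t ^ 2) / Real.sqrt (1 - x ^ 2 * Real.sin t ^ 2))
    (bound := fun _ => r / Real.sqrt (1 - r ^ 2))
    (μ := volume) (a := 0) (b := π/2) (x₀ := k) (ball_mem_nhds k hε)
    (Filter.Eventually.of_forall fun x => (cont_delta x).aestronglyMeasurable)
    ((cont_delta k).intervalIntegrable 0 (π/2))
    (((continuous_const.mul (Real.continuous_sin.pow 2)).neg.div (cont_delta k)
      fun t => ne_of_gt (sqrt_delta_pos hk t)).aestronglyMeasurable)
    ?_ (intervalIntegrable_const) ?_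
  · unfold ellipticE; exact h.2
  · refine Filter.Eventually.of_forall fun t _ x hx => ?_
    have hxr := ball_abs_le hk hx
    rw [Real.norm_eq_abs, abs_div]
    have hnum : |(-(x * Real.sin t ^ 2))| ≤ r := by
      rw [abs_neg, abs_mul, abs_of_nonneg (sq_nonneg (Real.sin t))]
      nlinarith [Real.sin_sq_le_one t, abs_nonneg x, sq_nonneg (Real.sin t)]
    have hden := sqrt_delta_lower hxr hr1 t
    rw [abs_of_nonneg (Real.sqrt_nonneg _)]
    exact div_le_div₀ hr0 hnum (Real.sqrt_pos.mpr hrq) hden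
  · refine Filter.Eventually.of_forall fun t _ x hx => ?_
    exact hasDerivAt_sqrt_delta (ball_abs_lt_one hk hx) t

lemma hasDerivAt_ellipticK {k : ℝ} (hk : |k| < 1) :
    HasDerivAt ellipticK
      (∫ t in (0:ℝ)..(π / 2),
        k * Real.sin t ^ 2 / Real.sqrt (1 - k ^ 2 * Real.sin t ^ 2) ^ 3) k := by
  set r : ℝ := (1 + |k|) / 2 with hr
  have hr1 : r < 1 := by rw [hr]; linarith
  have hr0 : 0 ≤ r := by rw [hr]; positivity
  have hrq : (0:ℝ) < 1 - r ^ 2 := by nlinarith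
  have hε : (0:ℝ) < (1 - |k|) / 2 := by linarith
  have h := intervalIntegral.hasDerivAt_integral_of_dominated_loc_of_deriv_le
    (F := fun x t => (Real.sqrt (1 - x ^ 2 * Real.sin t ^ 2))⁻¹)
    (F' := fun x t => x * Real.sin t ^ 2 / Real.sqrt (1 - x ^ 2 * Real.sin t ^ 2) ^ 3)
    (bound := fun _ => r / Real.sqrt (1 - r ^ 2) ^ 3)
    (μ := volume) (a := 0) (b := π/2) (x₀ := k) (ball_mem_nhds k hε)
    (Filter.Eventually.of_forall fun x => by
      by_cases hx : |x| < 1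
      · exact (cont_inv_delta hx).aestronglyMeasurable
      · exact ((cont_delta x).measurable.inv).aestronglyMeasurable)
    ((cont_inv_delta hk).intervalIntegrable 0 (π/2))
    (((continuous_const.mul (Real.continuous_sin.pow 2)).div ((cont_delta k).pow 3)
      fun t => pow_ne_zero 3 (ne_of_gt (sqrt_delta_pos hk t))).aestronglyMeasurable)
    ?_ (intervalIntegrable_const) ?_
  · unfold ellipticK; exact h.2
  · refine Filter.Eventually.of_forall fun t _ x hx => ?_
    have hxr := ball_abs_le hk hx
    rw [Real.norm_eq_abs, abs_div]
    have hnum : |x * Real.sin t ^ 2| ≤ r := by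
      rw [abs_mul, abs_of_nonneg (sq_nonneg (Real.sin t))]
      nlinarith [Real.sin_sq_le_one t, abs_nonneg x, sq_nonneg (Real.sin t)]
    have hden : Real.sqrt (1 - r ^ 2) ^ 3 ≤ Real.sqrt (1 - x ^ 2 * Real.sin t ^ 2) ^ 3 :=
      pow_le_pow_left₀ (Real.sqrt_nonneg _) (sqrt_delta_lower hxr hr1 t) 3
    rw [abs_of_nonneg (pow_nonneg (Real.sqrt_nonneg _) 3)]
    exact div_le_div₀ hr0 hnum (by positivity) hden
  · refine Filter.Eventually.of_forall fun t _ x hx => ?_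
    exact hasDerivAt_inv_sqrt_delta (ball_abs_lt_one hk hx) t

lemma hasDerivAt_ellipticE' {k : ℝ} (hk0 : 0 < k) (hk1 : k < 1) :
    HasDerivAt ellipticE ((ellipticE k - ellipticK k) / k) k := by
  have hk : |k| < 1 := by rw [abs_of_pos hk0]; exact hk1
  have h := hasDerivAt_ellipticE hk
  have hcongr : (∫ t in (0:ℝ)..(π / 2),
      -(k * Real.sin t ^ 2) / Real.sqrt (1 - k ^ 2 * Real.sin t ^ 2))
      = ∫ t in (0:ℝ)..(π / 2),
        (Real.sqrt (1 - k ^ 2 * Real.sin t ^ 2)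
          - (Real.sqrt (1 - k ^ 2 * Real.sin t ^ 2))⁻¹) / k := by
    refine intervalIntegral.integral_congr fun t _ => ?_
    have hd := sqrt_delta_pos hk t
    have hd2 : Real.sqrt (1 - k ^ 2 * Real.sin t ^ 2) ^ 2 = 1 - k ^ 2 * Real.sin t ^ 2 :=
      Real.sq_sqrt (le_of_lt (delta_pos hk t))
    have hinv : (Real.sqrt (1 - k ^ 2 * Real.sin t ^ 2))⁻¹
        * Real.sqrt (1 - k ^ 2 * Real.sin t ^ 2) = 1 := inv_mul_cancel₀ hd.ne'
    rw [div_eq_div_iff hd.ne' hk0.ne']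
    linear_combination -hd2 + hinv
  rw [hcongr, intervalIntegral.integral_div,
    intervalIntegral.integral_sub ((cont_delta k).intervalIntegrable 0 (π/2))
      ((cont_inv_delta hk).intervalIntegrable 0 (π/2))] at h
  exact h

lemma hasDerivAt_ellipticK' {k : ℝ} (hk0 : 0 < k) (hk1 : k < 1) :
    HasDerivAt ellipticK
      ((ellipticE k - (1 - k ^ 2) * ellipticK k) / (k * (1 - k ^ 2))) k := by
  have hk : |k| < 1 := by rw [abs_of_pos hk0]; exact hk1
  have h1k : (0:ℝ) < 1 - k ^ 2 := by nlinarith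
  have h := hasDerivAt_ellipticK hk
  set F : ℝ → ℝ := fun t =>
    (Real.cos t ^ 2 - Real.sin t ^ 2) / Real.sqrt (1 - k ^ 2 * Real.sin t ^ 2)
      + k ^ 2 * Real.sin t ^ 2 * Real.cos t ^ 2 / Real.sqrt (1 - k ^ 2 * Real.sin t ^ 2) ^ 3
    with hF_def
  have hF : ∀ t : ℝ, HasDerivAt
      (fun t => Real.sin t * Real.cos t / Real.sqrt (1 - k ^ 2 * Real.sin t ^ 2)) (F t) t := by
    intro t
    have hdpos := sqrt_delta_pos hk t
    have hd2 : Real.sqrt (1 - k ^ 2 * Real.sin t ^ 2) ^ 2 = 1 - k ^ 2 * Real.sin t ^ 2 :=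
      Real.sq_sqrt (le_of_lt (delta_pos hk t))
    have hc : Real.sin t ^ 2 + Real.cos t ^ 2 = 1 := Real.sin_sq_add_cos_sq t
    have hinner : HasDerivAt (fun t : ℝ => 1 - k ^ 2 * Real.sin t ^ 2)
        (-(k ^ 2 * (2 * Real.sin t ^ 1 * Real.cos t))) t := by
      simpa using (((Real.hasDerivAt_sin t).pow 2).const_mul (k ^ 2)).const_sub 1
    have hd : HasDerivAt (fun t : ℝ => Real.sqrt (1 - k ^ 2 * Real.sin t ^ 2))
        ((-(k ^ 2 * (2 * Real.sin t ^ 1 * Real.cos t)))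
          / (2 * Real.sqrt (1 - k ^ 2 * Real.sin t ^ 2))) t := by
      exact ((Real.hasDerivAt_sqrt (ne_of_gt (delta_pos hk t))).comp t hinner).congr_deriv
        (by ring)
    have hnum : HasDerivAt (fun t : ℝ => Real.sin t * Real.cos t)
        (Real.cos t * Real.cos t + Real.sin t * -Real.sin t) t :=
      (Real.hasDerivAt_sin t).mul (Real.hasDerivAt_cos t)
    have := hnum.div hd hdpos.ne'
    refine this.congr_deriv (Eq.symm ?_)
    rw [hF_def]
    field_simp
    ring_nf
  have hFcont : Continuous F := by
    rw [hF_def]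
    refine Continuous.add ?_ ?_
    · exact ((Real.continuous_cos.pow 2).sub (Real.continuous_sin.pow 2)).div (cont_delta k)
        fun t => (sqrt_delta_pos hk t).ne'
    · exact ((continuous_const.mul (Real.continuous_sin.pow 2)).mul (Real.continuous_cos.pow 2)).div
        ((cont_delta k).pow 3) fun t => pow_ne_zero 3 (sqrt_delta_pos hk t).ne'
  have hFzero : (∫ t in (0:ℝ)..(π / 2), F t) = 0 := by
    rw [intervalIntegral.integral_eq_sub_of_hasDerivAt (fun t _ => hF t)
      (hFcont.intervalIntegrable 0 (π/2))]
    simp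
  have hcongr : (∫ t in (0:ℝ)..(π / 2),
      k * Real.sin t ^ 2 / Real.sqrt (1 - k ^ 2 * Real.sin t ^ 2) ^ 3)
      = ∫ t in (0:ℝ)..(π / 2),
        ((Real.sqrt (1 - k ^ 2 * Real.sin t ^ 2) - k ^ 2 * F t) / (k * (1 - k ^ 2))
          - (Real.sqrt (1 - k ^ 2 * Real.sin t ^ 2))⁻¹ / k) := by
    refine intervalIntegral.integral_congr fun t _ => ?_
    have hdpos := sqrt_delta_pos hk t
    have hd2 : Real.sqrt (1 - k ^ 2 * Real.sin t ^ 2) ^ 2 = 1 - k ^ 2 * Real.sin t ^ 2 :=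
      Real.sq_sqrt (le_of_lt (delta_pos hk t))
    have hc : Real.sin t ^ 2 + Real.cos t ^ 2 = 1 := Real.sin_sq_add_cos_sq t
    set d := Real.sqrt (1 - k ^ 2 * Real.sin t ^ 2)
    set s := Real.sin t
    set c := Real.cos t
    have hA : d - k ^ 2 * ((c ^ 2 - s ^ 2) / d + k ^ 2 * s ^ 2 * c ^ 2 / d ^ 3)
        = (1 - k ^ 2) / d ^ 3 := by
      field_simp
      linear_combination (d^2 + 1 - k^2*s^2 - k^2*(c^2-s^2)) * hd2 + (-k^2) * hc
    show k * s ^ 2 / d ^ 3 = (d - k ^ 2 * ((c ^ 2 - s ^ 2) / d + k ^ 2 * s ^ 2 * c ^ 2 / d ^ 3))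
        / (k * (1 - k ^ 2)) - d⁻¹ / k
    rw [hA]
    field_simp
    linear_combination hd2
  rw [hcongr] at h
  have hint1 : IntervalIntegrable
      (fun t => Real.sqrt (1 - k ^ 2 * Real.sin t ^ 2) - k ^ 2 * F t) volume 0 (π/2) :=
    ((cont_delta k).sub (continuous_const.mul hFcont)).intervalIntegrable 0 (π/2)
  rw [intervalIntegral.integral_sub
      (hint1.div_const _)
      (((cont_inv_delta hk).div_const _).intervalIntegrable 0 (π/2)),
    intervalIntegral.integral_div, intervalIntegral.integral_div,
    intervalIntegral.integral_sub ((cont_delta k).intervalIntegrable 0 (π/2))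
      ((show Continuous fun t => k ^ 2 * F t from continuous_const.mul hFcont).intervalIntegrable 0 (π/2)),
    intervalIntegral.integral_const_mul, hFzero, mul_zero, sub_zero] at h
  have heq : (ellipticE k) / (k * (1 - k ^ 2)) - (ellipticK k) / k
      = (ellipticE k - (1 - k ^ 2) * ellipticK k) / (k * (1 - k ^ 2)) := by
    field_simp
  have h' : HasDerivAt ellipticK
      (ellipticE k / (k * (1 - k ^ 2)) - ellipticK k / k) k := h
  rw [heq] at h'
  exact h'

noncomputable def gEK1 (x : ℝ) : ℝ :=
  ellipticE (Real.sqrt x) ^ 2 / (2 * (1 - x))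
    - (ellipticK (Real.sqrt x) - ellipticE (Real.sqrt x)) ^ 2 / (2 * x)

lemma sqrt_mem {x : ℝ} (hx : x ∈ Ioo (0:ℝ) 1) :
    0 < Real.sqrt x ∧ Real.sqrt x < 1 ∧ Real.sqrt x ^ 2 = x := by
  obtain ⟨hx0, hx1⟩ := hx
  refine ⟨Real.sqrt_pos.mpr hx0, ?_, Real.sq_sqrt hx0.le⟩
  rw [show (1:ℝ) = Real.sqrt 1 by simp]
  exact Real.sqrt_lt_sqrt hx0.le hx1

lemma hasDerivAt_E_sqrt {x : ℝ} (hx : x ∈ Ioo (0:ℝ) 1) :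
    HasDerivAt (fun x => ellipticE (Real.sqrt x))
      ((ellipticE (Real.sqrt x) - ellipticK (Real.sqrt x)) / (2 * x)) x := by
  obtain ⟨hk0, hk1, hk2⟩ := sqrt_mem hx
  have hsq : HasDerivAt Real.sqrt (1 / (2 * Real.sqrt x)) x :=
    Real.hasDerivAt_sqrt (ne_of_gt hx.1)
  have h := (hasDerivAt_ellipticE' hk0 hk1).comp x hsq
  refine h.congr_deriv (Eq.symm ?_)
  rw [div_mul_div_comm, mul_one]
  congr 1
  linear_combination (-2 : ℝ) * hk2

lemma hasDerivAt_K_sqrt {x : ℝ} (hx : x ∈ Ioo (0:ℝ) 1) :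
    HasDerivAt (fun x => ellipticK (Real.sqrt x))
      ((ellipticE (Real.sqrt x) - (1 - x) * ellipticK (Real.sqrt x)) / (2 * x * (1 - x))) x := by
  obtain ⟨hk0, hk1, hk2⟩ := sqrt_mem hx
  have hsq : HasDerivAt Real.sqrt (1 / (2 * Real.sqrt x)) x :=
    Real.hasDerivAt_sqrt (ne_of_gt hx.1)
  have h := (hasDerivAt_ellipticK' hk0 hk1).comp x hsq
  refine h.congr_deriv (Eq.symm ?_)
  rw [hk2] at h ⊢
  rw [div_mul_div_comm, mul_one]
  congr 1
  linear_combination (-2 : ℝ) * (1 - x) * hk2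

lemma hasDerivAt_gEK {x : ℝ} (hx : x ∈ Ioo (0:ℝ) 1) :
    HasDerivAt gEK (gEK1 x) x := by
  obtain ⟨hx0, hx1⟩ := hx
  have hE := hasDerivAt_E_sqrt ⟨hx0, hx1⟩
  have hK := hasDerivAt_K_sqrt ⟨hx0, hx1⟩
  have h := hE.mul (hK.sub hE)
  have hgeq : gEK = fun x => ellipticE (Real.sqrt x) *
      (ellipticK (Real.sqrt x) - ellipticE (Real.sqrt x)) := rfl
  rw [hgeq]
  refine h.congr_deriv (Eq.symm ?_)
  simp only [Pi.sub_apply, Pi.mul_apply]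
  set e := ellipticE (Real.sqrt x)
  set q := ellipticK (Real.sqrt x)
  unfold gEK1
  have h1x : (1:ℝ) - x ≠ 0 := by linarith
  field_simp
  ring

lemma hasDerivAt_gEK1 {x : ℝ} (hx : x ∈ Ioo (0:ℝ) 1) :
    HasDerivAt gEK1
      ((1 / 2) * (ellipticE (Real.sqrt x) / (1 - x) -
        (ellipticK (Real.sqrt x) - ellipticE (Real.sqrt x)) / x) ^ 2) x := by
  obtain ⟨hx0, hx1⟩ := hx
  have h1x : (0:ℝ) < 1 - x := by linarith
  have hE := hasDerivAt_E_sqrt ⟨hx0, hx1⟩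
  have hK := hasDerivAt_K_sqrt ⟨hx0, hx1⟩
  have hden1 : HasDerivAt (fun x : ℝ => 2 * (1 - x)) (2 * (0 - 1)) x :=
    ((hasDerivAt_const x 1).sub (hasDerivAt_id x)).const_mul 2
  have hden2 : HasDerivAt (fun x : ℝ => 2 * x) 2 x := by
    simpa using (hasDerivAt_id x).const_mul 2
  have h1 := (hE.mul hE).div hden1 (by positivity)
  have h2 := ((hK.sub hE).mul (hK.sub hE)).div hden2 (by positivity)
  have h := h1.sub h2
  have hgeq : gEK1 = fun x => ellipticE (Real.sqrt x) * ellipticE (Real.sqrt x) / (2 * (1 - x))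
      - (ellipticK (Real.sqrt x) - ellipticE (Real.sqrt x)) *
        (ellipticK (Real.sqrt x) - ellipticE (Real.sqrt x)) / (2 * x) := by
    funext y
    unfold gEK1
    ring
  rw [hgeq]
  refine h.congr_deriv (Eq.symm ?_)
  simp only [Pi.sub_apply, Pi.mul_apply]
  set e := ellipticE (Real.sqrt x)
  set q := ellipticK (Real.sqrt x)
  field_simp
  ring

lemma sqrt_abs_lt {x : ℝ} (hx : x ∈ Ico (0:ℝ) 1) : |Real.sqrt x| < 1 := by
  rw [abs_of_nonneg (Real.sqrt_nonneg x)]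
  rw [show (1:ℝ) = Real.sqrt 1 by simp]
  exact Real.sqrt_lt_sqrt hx.1 hx.2

lemma continuousOn_gEK : ContinuousOn gEK (Ico (0:ℝ) 1) := by
  intro x hx
  have h1 : ContinuousAt (fun x => ellipticE (Real.sqrt x)) x :=
    ((hasDerivAt_ellipticE (sqrt_abs_lt hx)).continuousAt).comp
      Real.continuous_sqrt.continuousAt
  have h2 : ContinuousAt (fun x => ellipticK (Real.sqrt x)) x :=
    ((hasDerivAt_ellipticK (sqrt_abs_lt hx)).continuousAt).comp
      Real.continuous_sqrt.continuousAt
  exact ((h1.mul (h2.sub h1)).continuousWithinAt)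

lemma deriv_gEK_eventually {x : ℝ} (hx : x ∈ Ioo (0:ℝ) 1) :
    deriv gEK =ᶠ[nhds x] gEK1 := by
  filter_upwards [isOpen_Ioo.eventually_mem hx] with y hy
  exact (hasDerivAt_gEK hy).deriv

lemma deriv2_gEK {x : ℝ} (hx : x ∈ Ioo (0:ℝ) 1) :
    deriv (deriv gEK) x =
      (1 / 2) * (ellipticE (Real.sqrt x) / (1 - x) -
        (ellipticK (Real.sqrt x) - ellipticE (Real.sqrt x)) / x) ^ 2 := by
  rw [(deriv_gEK_eventually hx).deriv_eq]
  exact (hasDerivAt_gEK1 hx).deriv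

theorem gEK_convex :
    ConvexOn ℝ (Set.Ico (0 : ℝ) 1) gEK ∧
    ∀ x ∈ Set.Ioo (0 : ℝ) 1,
      deriv (deriv gEK) x =
        (1 / 2) * (ellipticE (Real.sqrt x) / (1 - x) -
          (ellipticK (Real.sqrt x) - ellipticE (Real.sqrt x)) / x) ^ 2 := by
  constructor
  · apply convexOn_of_deriv2_nonneg (convex_Ico 0 1) continuousOn_gEK
    · rw [interior_Ico]
      exact fun x hx => (hasDerivAt_gEK hx).differentiableAt.differentiableWithinAt
    · rw [interior_Ico]
      intro x hx
      have : DifferentiableAt ℝ gEK1 x := (hasDerivAt_gEK1 hx).differentiableAt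
      exact ((deriv_gEK_eventually hx).differentiableAt_iff.mpr this).differentiableWithinAt
    · rw [interior_Ico]
      intro x hx
      have h2 : deriv^[2] gEK x = deriv (deriv gEK) x := by
        simp [Function.iterate_succ, Function.iterate_zero]
      rw [h2, deriv2_gEK hx]
      positivity
  · exact fun x hx => deriv2_gEK hx
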